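/- Let G be a finite simple graph with m edges, t triangles, and arboricity α(G). Fix parameters ε ∈ (0,1) and t̃ with t/4 ≤ t̃ ≤ t, and set γ = max{α(G), t̃^{1/3}} and τ_d = 8mγ²/(ε·t̃). Then the number of edges e with d(e) > τ_d is at most (1/4)·min{(ε·t̃)^{2/3}, ε·t̃/α(G)}, where d(e) is the minimum degree of the endpoints of e. -/

import Mathlib

open SimpleGraph Finset
open scoped Classical

/-- The arboricity of a graph: the minimum number of forests needed to cover its edge set. -/
noncomputable def arboricity {V : Type*} (G : SimpleGraph V) : ℕ :=
  sInf {k | ∃ F : Fin k → SimpleGraph V, (∀ i, (F i).IsAcyclic) ∧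
    ∀ ⦃a b : V⦄, G.Adj a b → ∃ i, (F i).Adj a b}

/-- `minDeg G e` is the minimum of the degrees of the endpoints of `e`. -/
def minDeg {V : Type*} [Fintype V] (G : SimpleGraph V) [DecidableRel G.Adj] (e : Sym2 V) : ℕ :=
  Sym2.lift ⟨fun u v => min (G.degree u) (G.degree v), fun u v => min_comm _ _⟩ e

set_option linter.unusedSectionVars false
set_option linter.unusedVariables false
set_option maxHeartbeats 800000

section Aux
variable {V : Type*} [Fintype V] [DecidableEq V]

lemma path_length_eq_dist {F : SimpleGraph V} (hF : F.IsAcyclic) {u r : V}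
    {p : F.Walk u r} (hp : p.IsPath) : p.length = F.dist u r := by
  obtain ⟨q, hq, hql⟩ := p.reachable.exists_path_of_dist
  have h := hF.path_unique ⟨p, hp⟩ ⟨q, hq⟩
  have h2 : p = q := congrArg Subtype.val h
  rw [h2, hql]

lemma dist_ne_of_adj {F : SimpleGraph V} (hF : F.IsAcyclic) {u v r : V}
    (huv : F.Adj u v) (hvr : F.Reachable v r) : F.dist u r ≠ F.dist v r := by
  intro hd
  obtain ⟨q, hq, hql⟩ := hvr.exists_path_of_dist
  by_cases hu : u ∈ q.support
  · have h1 : (q.dropUntil u hu).length = F.dist u r :=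
      path_length_eq_dist hF (hq.dropUntil hu)
    have h2 : (q.takeUntil u hu).length + (q.dropUntil u hu).length = q.length := by
      rw [← Walk.length_append, Walk.take_spec]
    have h3 : (q.takeUntil u hu).length = 0 := by omega
    have h4 := Walk.eq_of_length_eq_zero h3
    exact huv.ne h4.symm
  · have hp : (Walk.cons huv q).IsPath := hq.cons hu
    have h5 := path_length_eq_dist hF hp
    simp only [Walk.length_cons] at h5
    omega

lemma forest_sum (G : SimpleGraph V) [DecidableRel G.Adj] (F : SimpleGraph V)
    (hF : F.IsAcyclic) : ∑ e ∈ F.edgeFinset, minDeg G e ≤ ∑ v, G.degree v := by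
  classical
  set N := Fintype.card V with hN
  set enc : V → ℕ := fun v => ((Fintype.equivFin V) v : ℕ) with henc_def
  set rt : V → V := fun v => (F.connectedComponentMk v).out with hrt_def
  set dd : V → ℕ := fun v => F.dist v (rt v) with hdd_def
  set mkey : V → ℕ := fun v => dd v * N + enc v with hmkey_def
  have henc : ∀ v, enc v < N := fun v => ((Fintype.equivFin V) v).2
  have ddle : ∀ a b : V, mkey a ≤ mkey b → dd a ≤ dd b := by
    intro a b h
    by_contra hc
    push_neg at hc
    have h1 : dd b + 1 ≤ dd a := hc
    have h2 : (dd b + 1) * N ≤ dd a * N := Nat.mul_le_mul_right _ h1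
    have h3 := henc b
    simp only [hmkey_def, add_one_mul] at h h2
    omega
  have hmkey_inj : Function.Injective mkey := by
    intro u v h
    have h1 : dd u = dd v := le_antisymm (ddle u v h.le) (ddle v u h.ge)
    have h2 : enc u = enc v := by
      simp only [hmkey_def, h1] at h; omega
    exact (Fintype.equivFin V).injective (Fin.ext h2)
  set f : Sym2 V → V := Sym2.lift ⟨fun u v => if mkey u < mkey v then v else u, by
    intro u v
    dsimp only
    rcases lt_trichotomy (mkey u) (mkey v) with h | h | h
    · rw [if_pos h, if_neg (asymm h)]
    · have : u = v := hmkey_inj h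
      subst this; rfl
    · rw [if_neg (asymm h), if_pos h]⟩ with hf_def
  have hchoose : ∀ {u v : V}, F.Adj u v → ∃ x y, s(u, v) = s(x, y) ∧ f s(u, v) = x ∧
      F.Adj x y ∧ mkey y < mkey x := by
    intro u v h
    by_cases hlt : mkey u < mkey v
    · exact ⟨v, u, Sym2.eq_swap, by simp [hf_def, hlt], h.symm, hlt⟩
    · refine ⟨u, v, rfl, by simp [hf_def, hlt], h, ?_⟩
      rcases lt_or_ge (mkey v) (mkey u) with h' | h'
      · exact h'
      · exact absurd (hmkey_inj (le_antisymm h' (not_lt.mp hlt)).symm) h.ne'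
  have core : ∀ {x a b : V}, F.Adj x a → F.Adj x b → mkey a < mkey x → mkey b < mkey x →
      a = b := by
    intro x a b hxa hxb hma hmb
    by_contra hab
    have hcomp : ∀ {w : V}, F.Adj x w → rt w = rt x := by
      intro w hw
      simp only [hrt_def]
      congr 1
      exact ConnectedComponent.eq.mpr hw.symm.reachable
    have hxr : F.Reachable x (rt x) := by
      have h0 : F.connectedComponentMk (rt x) = F.connectedComponentMk x :=
        (F.connectedComponentMk x).out_eq
      exact (ConnectedComponent.eq.mp h0).symm
    have har : F.Reachable a (rt x) := hxa.symm.reachable.trans hxr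
    have hbr : F.Reachable b (rt x) := hxb.symm.reachable.trans hxr
    have hdda : dd a = F.dist a (rt x) := by show F.dist a (rt a) = _; rw [hcomp hxa]
    have hddb : dd b = F.dist b (rt x) := by show F.dist b (rt b) = _; rw [hcomp hxb]
    have hddx : dd x = F.dist x (rt x) := rfl
    have hlt1 : dd a < dd x := by
      have h1 := ddle a x hma.le
      have h2 : dd a ≠ dd x := by
        rw [hdda, hddx]; exact dist_ne_of_adj hF hxa.symm hxr
      omega
    have hlt2 : dd b < dd x := by
      have h1 := ddle b x hmb.le
      have h2 : dd b ≠ dd x := by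
        rw [hddb, hddx]; exact dist_ne_of_adj hF hxb.symm hxr
      omega
    obtain ⟨p, hp, hpl⟩ := har.exists_path_of_dist
    obtain ⟨q, hq, hql⟩ := hbr.exists_path_of_dist
    have hxp : x ∉ p.support := by
      intro hx
      have h1 : (p.dropUntil x hx).length = F.dist x (rt x) :=
        path_length_eq_dist hF (hp.dropUntil hx)
      have h2 := Walk.length_dropUntil_le p hx
      rw [h1, hpl] at h2
      rw [hdda, hddx] at hlt1
      omega
    have hxq : x ∉ q.support := by
      intro hx
      have h1 : (q.dropUntil x hx).length = F.dist x (rt x) :=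
        path_length_eq_dist hF (hq.dropUntil hx)
      have h2 := Walk.length_dropUntil_le q hx
      rw [h1, hql] at h2
      rw [hddb, hddx] at hlt2
      omega
    have hP1 : (Walk.cons hxa p).IsPath := hp.cons hxp
    have hP2 : (Walk.cons hxb q).IsPath := hq.cons hxq
    have heq := hF.path_unique ⟨Walk.cons hxa p, hP1⟩ ⟨Walk.cons hxb q, hP2⟩
    have heq2 : Walk.cons hxa p = Walk.cons hxb q := congrArg Subtype.val heq
    have hsup := congrArg Walk.support heq2
    rw [Walk.support_cons, Walk.support_cons] at hsup
    have hsup2 : p.support = q.support := List.cons_injective hsup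
    rw [p.support_eq_cons, q.support_eq_cons] at hsup2
    exact hab (by injection hsup2)
  have hminle : ∀ e ∈ F.edgeFinset, minDeg G e ≤ G.degree (f e) := by
    intro e he
    induction e using Sym2.ind with
    | _ u v =>
      have h : F.Adj u v := by rwa [mem_edgeFinset, mem_edgeSet] at he
      obtain ⟨x, y, hexy, hfx, _, _⟩ := hchoose h
      rw [hfx, hexy]
      simp only [minDeg, Sym2.lift_mk]
      exact min_le_left _ _
  have hinj : ∀ x ∈ F.edgeFinset, ∀ y ∈ F.edgeFinset, f x = f y → x = y := by
    intro e1 he1 e2 he2 hfeq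
    induction e1 using Sym2.ind with
    | _ a b =>
      induction e2 using Sym2.ind with
      | _ c d =>
        have hab : F.Adj a b := by rwa [mem_edgeFinset, mem_edgeSet] at he1
        have hcd : F.Adj c d := by rwa [mem_edgeFinset, mem_edgeSet] at he2
        obtain ⟨x1, y1, he1', hf1, hadj1, hm1⟩ := hchoose hab
        obtain ⟨x2, y2, he2', hf2, hadj2, hm2⟩ := hchoose hcd
        have hx : x1 = x2 := by rw [← hf1, ← hf2, hfeq]
        subst hx
        have hy : y1 = y2 := core hadj1 hadj2 hm1 hm2
        rw [he1', he2', hy]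
  calc ∑ e ∈ F.edgeFinset, minDeg G e ≤ ∑ e ∈ F.edgeFinset, G.degree (f e) :=
        Finset.sum_le_sum hminle
    _ = ∑ v ∈ F.edgeFinset.image f, G.degree v := by rw [Finset.sum_image hinj]
    _ ≤ ∑ v, G.degree v := Finset.sum_le_sum_of_subset (Finset.subset_univ _)

lemma single_edge_acyclic (e : Sym2 V) : (SimpleGraph.fromEdgeSet {e}).IsAcyclic := by
  intro v c hc
  have h3 := hc.three_le_length
  have hnodup : c.edges.Nodup := hc.edges_nodup
  have hsub : ∀ x ∈ c.edges, x = e := by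
    intro x hx
    have h := c.edges_subset_edgeSet hx
    rw [edgeSet_fromEdgeSet] at h
    exact h.1
  have hlen : c.edges.length = c.length := c.length_edges
  have hcard : c.edges.toFinset.card = c.edges.length := List.toFinset_card_of_nodup hnodup
  have hsub2 : c.edges.toFinset ⊆ {e} := by
    intro x hx
    rw [List.mem_toFinset] at hx
    rw [Finset.mem_singleton]
    exact hsub x hx
  have := Finset.card_le_card hsub2
  simp only [Finset.card_singleton] at this
  omega

lemma arboricity_mem (G : SimpleGraph V) [DecidableRel G.Adj] :
    ∃ F : Fin (arboricity G) → SimpleGraph V, (∀ i, (F i).IsAcyclic) ∧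
      ∀ ⦃a b : V⦄, G.Adj a b → ∃ i, (F i).Adj a b := by
  have hne : {k | ∃ F : Fin k → SimpleGraph V, (∀ i, (F i).IsAcyclic) ∧
      ∀ ⦃a b : V⦄, G.Adj a b → ∃ i, (F i).Adj a b}.Nonempty := by
    refine ⟨G.edgeFinset.card, fun i => SimpleGraph.fromEdgeSet {(G.edgeFinset.equivFin.symm i : Sym2 V)},
      fun i => single_edge_acyclic _, ?_⟩
    intro a b hab
    have hmem : s(a, b) ∈ G.edgeFinset := by rwa [mem_edgeFinset, mem_edgeSet]
    refine ⟨G.edgeFinset.equivFin ⟨s(a, b), hmem⟩, ?_⟩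
    rw [fromEdgeSet_adj]
    simp only [Equiv.symm_apply_apply]
    exact ⟨rfl, hab.ne⟩
  exact Nat.sInf_mem hne

lemma CN (G : SimpleGraph V) [DecidableRel G.Adj] :
    ∑ e ∈ G.edgeFinset, minDeg G e ≤ arboricity G * (2 * G.edgeFinset.card) := by
  obtain ⟨F, hacyc, hcov⟩ := arboricity_mem G
  have step1 : ∀ e ∈ G.edgeFinset, minDeg G e ≤
      ∑ i : Fin (arboricity G), if e ∈ (G ⊓ F i).edgeFinset then minDeg G e else 0 := by
    intro e he
    induction e using Sym2.ind with
    | _ a b =>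
      have hab : G.Adj a b := by rwa [mem_edgeFinset, mem_edgeSet] at he
      obtain ⟨i, hi⟩ := hcov hab
      have hmem : s(a, b) ∈ (G ⊓ F i).edgeFinset := by
        rw [mem_edgeFinset, mem_edgeSet]; exact ⟨hab, hi⟩
      have h := Finset.single_le_sum
        (f := fun i => if s(a, b) ∈ (G ⊓ F i).edgeFinset then minDeg G s(a, b) else 0)
        (fun i _ => by positivity) (Finset.mem_univ i)
      rwa [if_pos hmem] at h
  calc ∑ e ∈ G.edgeFinset, minDeg G e
      ≤ ∑ e ∈ G.edgeFinset, ∑ i : Fin (arboricity G),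
          if e ∈ (G ⊓ F i).edgeFinset then minDeg G e else 0 := Finset.sum_le_sum step1
    _ = ∑ i : Fin (arboricity G), ∑ e ∈ G.edgeFinset,
          if e ∈ (G ⊓ F i).edgeFinset then minDeg G e else 0 := Finset.sum_comm
    _ ≤ ∑ _i : Fin (arboricity G), (2 * G.edgeFinset.card) := by
        refine Finset.sum_le_sum fun i _ => ?_
        rw [← Finset.sum_filter]
        have hsub : G.edgeFinset.filter (· ∈ (G ⊓ F i).edgeFinset) ⊆ (G ⊓ F i).edgeFinset :=
          fun e he => (Finset.mem_filter.mp he).2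
        have hmono : (G ⊓ F i).IsAcyclic := fun v c hc =>
          hacyc i (c.mapLe inf_le_right) (hc.mapLe inf_le_right)
        calc ∑ e ∈ G.edgeFinset.filter (· ∈ (G ⊓ F i).edgeFinset), minDeg G e
            ≤ ∑ e ∈ (G ⊓ F i).edgeFinset, minDeg G e :=
              Finset.sum_le_sum_of_subset hsub
          _ ≤ ∑ v, G.degree v := by
              have h := forest_sum G (G ⊓ F i) hmono
              have heq : ∀ (h1 h2 : Fintype (G ⊓ F i).edgeSet),
                  @edgeFinset V (G ⊓ F i) h1 = @edgeFinset V (G ⊓ F i) h2 := by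
                intro h1 h2
                congr 1
                exact Subsingleton.elim _ _
              rw [heq _ _]
              exact h
          _ = 2 * G.edgeFinset.card := G.sum_degrees_eq_twice_card_edges
    _ = arboricity G * (2 * G.edgeFinset.card) := by
        rw [Finset.sum_const, Finset.card_univ, Fintype.card_fin, smul_eq_mul]

end Aux

/-- with `γ = max{α(G), t̃^{1/3}}` and `τ_d = 8mγ²/(ε·t̃)`, if
`t/4 ≤ t̃ ≤ t`, `ε ∈ (0,1)` and `α(G) ≥ 1`, then the number of edges with `d(e) > τ_d`
is at most `(1/4)·min{(ε·t̃)^{2/3}, ε·t̃/α(G)}`. -/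
theorem stmt_9 {V : Type*} [Fintype V] [DecidableEq V] (G : SimpleGraph V)
    [DecidableRel G.Adj] (ε tTil : ℝ) (hε : ε ∈ Set.Ioo (0 : ℝ) 1) (htpos : 0 < tTil)
    (ht1 : ((G.cliqueFinset 3).card : ℝ) / 4 ≤ tTil)
    (ht2 : tTil ≤ ((G.cliqueFinset 3).card : ℝ))
    (halpha : 1 ≤ (arboricity G : ℝ)) :
    ((G.edgeFinset.filter fun e =>
        8 * (G.edgeFinset.card : ℝ) * (max (arboricity G : ℝ) (tTil ^ ((1 : ℝ) / 3))) ^ 2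
          / (ε * tTil) < (minDeg G e : ℝ)).card : ℝ) ≤
      (1 / 4) * min ((ε * tTil) ^ ((2 : ℝ) / 3)) (ε * tTil / (arboricity G : ℝ)) := by
  obtain ⟨hε0, hε1⟩ := hε
  set m : ℝ := (G.edgeFinset.card : ℝ) with hm_def
  set α : ℝ := (arboricity G : ℝ) with hα_def
  set γ : ℝ := max α (tTil ^ ((1 : ℝ) / 3)) with hγ_def
  set τ : ℝ := 8 * m * γ ^ 2 / (ε * tTil) with hτ_def
  -- m ≥ 1
  have htri : (G.cliqueFinset 3).Nonempty := by
    rw [← Finset.card_pos]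
    have h0 : (0 : ℝ) < ((G.cliqueFinset 3).card : ℝ) := lt_of_lt_of_le htpos ht2
    exact_mod_cast h0
  have hm1 : (1 : ℝ) ≤ m := by
    obtain ⟨s, hs⟩ := htri
    rw [mem_cliqueFinset_iff] at hs
    have hcard : s.card = 3 := hs.2
    obtain ⟨a, ha, b, hb, hne⟩ := Finset.one_lt_card.mp (by omega : 1 < s.card)
    have hadj : G.Adj a b := hs.1 (Finset.mem_coe.mpr ha) (Finset.mem_coe.mpr hb) hne
    have hmem : s(a, b) ∈ G.edgeFinset := by rwa [mem_edgeFinset, mem_edgeSet]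
    have hpos : 0 < G.edgeFinset.card := Finset.card_pos.mpr ⟨_, hmem⟩
    rw [hm_def]
    exact_mod_cast hpos
  have hm0 : (0 : ℝ) < m := by linarith
  have hγα : α ≤ γ := le_max_left _ _
  have hγ0 : (0 : ℝ) < γ := by
    calc (0:ℝ) < 1 := one_pos
    _ ≤ α := halpha
    _ ≤ γ := hγα
  have het : (0 : ℝ) < ε * tTil := mul_pos hε0 htpos
  set sδ : ℝ := (ε * tTil) ^ ((1 : ℝ) / 3) with hsδ_def
  have hsδ0 : (0 : ℝ) ≤ sδ := Real.rpow_nonneg het.le _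
  have hs3 : sδ ^ (3 : ℕ) = ε * tTil := by
    rw [hsδ_def, ← Real.rpow_natCast ((ε * tTil) ^ ((1:ℝ)/3)) 3, ← Real.rpow_mul het.le]
    norm_num
  have hs2 : sδ ^ (2 : ℕ) = (ε * tTil) ^ ((2 : ℝ) / 3) := by
    rw [hsδ_def, ← Real.rpow_natCast ((ε * tTil) ^ ((1:ℝ)/3)) 2, ← Real.rpow_mul het.le]
    norm_num
  have hγs : sδ ≤ γ := by
    refine le_trans ?_ (le_max_right α (tTil ^ ((1 : ℝ) / 3)))
    exact Real.rpow_le_rpow het.le (by nlinarith) (by norm_num)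
  have hτ0 : (0 : ℝ) < τ := by positivity
  set P := G.edgeFinset.filter fun e => τ < (minDeg G e : ℝ) with hP_def
  have hcount : (P.card : ℝ) * τ ≤ α * (2 * m) := by
    have h1 : P.card • τ ≤ ∑ e ∈ P, (minDeg G e : ℝ) :=
      Finset.card_nsmul_le_sum P _ τ fun e he => (Finset.mem_filter.mp he).2.le
    rw [nsmul_eq_mul] at h1
    have h2 : ∑ e ∈ P, (minDeg G e : ℝ) ≤ ∑ e ∈ G.edgeFinset, (minDeg G e : ℝ) :=
      Finset.sum_le_sum_of_subset_of_nonneg (Finset.filter_subset _ _)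
        (fun _ _ _ => Nat.cast_nonneg _)
    have h3 : ∑ e ∈ G.edgeFinset, (minDeg G e : ℝ) ≤ α * (2 * m) := by
      have := CN G
      have h4 : ((∑ e ∈ G.edgeFinset, minDeg G e : ℕ) : ℝ)
          ≤ ((arboricity G * (2 * G.edgeFinset.card) : ℕ) : ℝ) := Nat.cast_le.mpr this
      push_cast at h4
      rw [hα_def, hm_def]
      exact h4
    linarith
  have hc : (P.card : ℝ) ≤ α * (ε * tTil) / (4 * γ ^ 2) := by
    rw [le_div_iff₀ (by positivity)]
    have h2 : (P.card : ℝ) * (8 * m * γ ^ 2) ≤ α * (2 * m) * (ε * tTil) := by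
      rw [hτ_def, mul_div_assoc'] at hcount
      exact (div_le_iff₀ het).mp hcount
    nlinarith [h2, hm0]
  refine le_trans hc ?_
  rw [show (1/4 : ℝ) * min ((ε * tTil) ^ ((2:ℝ)/3)) (ε * tTil / α)
      = min ((1/4) * ((ε * tTil) ^ ((2:ℝ)/3))) ((1/4) * (ε * tTil / α)) from
    (mul_min_of_nonneg _ _ (by norm_num))]
  refine le_min ?_ ?_
  · rw [← hs2, ← hs3]
    rw [div_le_iff₀ (by positivity)]
    nlinarith [mul_le_mul hγα hγs hsδ0 hγ0.le, sq_nonneg sδ, hsδ0]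
  · have hα0 : (0 : ℝ) < α := by linarith
    have key : α ≤ γ ^ 2 / α := by
      rw [le_div_iff₀ hα0]
      nlinarith [mul_le_mul hγα hγα hα0.le hγ0.le]
    have h6 : α * (ε * tTil) ≤ (γ ^ 2 / α) * (ε * tTil) :=
      mul_le_mul_of_nonneg_right key het.le
    rw [div_le_iff₀ (by positivity : (0:ℝ) < 4 * γ ^ 2)]
    calc α * (ε * tTil) ≤ (γ ^ 2 / α) * (ε * tTil) := h6
      _ = 1 / 4 * (ε * tTil / α) * (4 * γ ^ 2) := by field_simp
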